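/- In the AI regulation game with quadratic costs, suppose both C0 and C1 satisfy the investment condition, let γ0^A := (δ/2)·C0⁻¹·r, γ1^A := γ0^A + ((1−δ)/2)·C1⁻¹·r, and let β1^A be the β-coordinate of γ1^A. Fix regulation θG = 0 and 0 ≤ θD < β1^A. Suppose there exists a pair (γ0', γ1') with γ0' = (α0', β0'), α0' ≥ 0, β0' ≥ 0, such that γ1' maximizes U_D(γ0', ·) over F(γ0', θD), the β-coordinate of γ1' equals θD (minimal compliance), and U_G(γ0', γ1') > U_G(γ0^A, γ1^A). Then every subgame perfect equilibrium (b, γ0*) under regulation (0, θD) has equilibrium outcome safety equal to θD; in particular the outcome safety is strictly below β1^A, i.e., the regulation backfires. -/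

import Mathlib

open Matrix

/-- The domain specialist's utility
`U_D(γ0, γ1) = (1−δ)·(rα·α1 + rβ·β1) − (γ1−γ0)ᵀ C1 (γ1−γ0)`. -/
noncomputable def UD (c1aa c1ab c1bb rα rβ δ : ℝ) (γ0 γ1 : Fin 2 → ℝ) : ℝ :=
  (1 - δ) * (rα * γ1 0 + rβ * γ1 1)
    - (γ1 - γ0) ⬝ᵥ ((!![c1aa, c1ab; c1ab, c1bb] : Matrix (Fin 2) (Fin 2) ℝ) *ᵥ (γ1 - γ0))

/-- The generalist's utility `U_G(γ0, γ1) = δ·(rα·α1 + rβ·β1) − γ0ᵀ C0 γ0`. -/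
noncomputable def UG (c0aa c0ab c0bb rα rβ δ : ℝ) (γ0 γ1 : Fin 2 → ℝ) : ℝ :=
  δ * (rα * γ1 0 + rβ * γ1 1)
    - γ0 ⬝ᵥ ((!![c0aa, c0ab; c0ab, c0bb] : Matrix (Fin 2) (Fin 2) ℝ) *ᵥ γ0)

/-- Subgame perfect equilibrium under regulation `(θG, θD)`: `b` maps each generalist
strategy to a specialist best response over the regulated feasible set
`F(γ0, θD) = {(α, β) : α ≥ α0, β ≥ max(β0, θD)}`, and `γ0s` maximizes the generalist's
utility over her regulated strategies `{(α, β) : α ≥ 0, β ≥ θG}`. -/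
def IsSPE (c0aa c0ab c0bb c1aa c1ab c1bb rα rβ δ θG θD : ℝ)
    (b : (Fin 2 → ℝ) → (Fin 2 → ℝ)) (γ0s : Fin 2 → ℝ) : Prop :=
  (∀ γ0 : Fin 2 → ℝ,
      (γ0 0 ≤ (b γ0) 0 ∧ max (γ0 1) θD ≤ (b γ0) 1) ∧
      ∀ γ : Fin 2 → ℝ, γ0 0 ≤ γ 0 → max (γ0 1) θD ≤ γ 1 →
        UD c1aa c1ab c1bb rα rβ δ γ0 γ ≤ UD c1aa c1ab c1bb rα rβ δ γ0 (b γ0)) ∧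
  0 ≤ γ0s 0 ∧ θG ≤ γ0s 1 ∧
  ∀ γ0 : Fin 2 → ℝ, 0 ≤ γ0 0 → θG ≤ γ0 1 →
    UG c0aa c0ab c0bb rα rβ δ γ0 (b γ0) ≤ UG c0aa c0ab c0bb rα rβ δ γ0s (b γ0s)

/-- The no-regulation equilibrium strategy of the generalist: `γ0^A = (δ/2)·C0⁻¹·r`. -/
noncomputable def gamma0A (c0aa c0ab c0bb rα rβ δ : ℝ) : Fin 2 → ℝ :=
  (δ / 2) • ((!![c0aa, c0ab; c0ab, c0bb] : Matrix (Fin 2) (Fin 2) ℝ)⁻¹ *ᵥ ![rα, rβ])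

/-- The no-regulation equilibrium outcome: `γ1^A = γ0^A + ((1−δ)/2)·C1⁻¹·r`. -/
noncomputable def gamma1A (c0aa c0ab c0bb c1aa c1ab c1bb rα rβ δ : ℝ) : Fin 2 → ℝ :=
  gamma0A c0aa c0ab c0bb rα rβ δ +
    ((1 - δ) / 2) • ((!![c1aa, c1ab; c1ab, c1bb] : Matrix (Fin 2) (Fin 2) ℝ)⁻¹ *ᵥ ![rα, rβ])

/-- The paper's (one-sided) investment condition on a cost matrix
`!![caa, cab; cab, cbb]`. -/
def InvCond (caa cab cbb rα rβ : ℝ) : Prop :=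
  cab < min (Real.sqrt (caa * cbb)) (min (caa * rβ / rα) (cbb * rα / rβ))

/-!
Under the investment condition a cost matrix that is not positive definite has a cost that
vanishes along a ray in the positive orthant, where revenue grows linearly; so the bounded
problems of an equilibrium force `C0` and `C1` to be positive definite. The specialist's utility
is then strictly concave with unconstrained peak `γ0 + v`, `v = ((1-δ)/2) C1⁻¹ r ≥ 0`: her best
response is unique, and it equals `γ0 + v` unless it sits on the safety floor `θD`. In that case
the generalist earns `U_G(γ0, γ0 + v) ≤ U_G(γ0^A, γ1^A)`, which the deviation to `γ0'` (answered by
`γ1'`) beats. So the equilibrium safety is `θD < β1^A`.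
-/

open Set

def costForm (caa cab cbb : ℝ) (d : Fin 2 → ℝ) : ℝ :=
  d ⬝ᵥ ((!![caa, cab; cab, cbb] : Matrix (Fin 2) (Fin 2) ℝ) *ᵥ d)

lemma costForm_apply (caa cab cbb : ℝ) (d : Fin 2 → ℝ) :
    costForm caa cab cbb d = caa * d 0 ^ 2 + 2 * cab * d 0 * d 1 + cbb * d 1 ^ 2 := by
  simp only [costForm, mulVec, dotProduct, Fin.sum_univ_two, of_apply, cons_val', cons_val_zero,
    cons_val_one, empty_val', cons_val_fin_one]
  ring

section PositiveDefinite

variable {caa cab cbb : ℝ}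

lemma costForm_nonneg (ha : 0 < caa) (hdet : 0 < caa * cbb - cab * cab) (d : Fin 2 → ℝ) :
    0 ≤ costForm caa cab cbb d := by
  rw [costForm_apply]
  nlinarith [sq_nonneg (caa * d 0 + cab * d 1), mul_nonneg hdet.le (sq_nonneg (d 1))]

lemma eq_zero_of_costForm_nonpos (ha : 0 < caa) (hdet : 0 < caa * cbb - cab * cab)
    {d : Fin 2 → ℝ} (h : costForm caa cab cbb d ≤ 0) : d = 0 := by
  have hcompl : caa * costForm caa cab cbb d = (caa * d 0 + cab * d 1) ^ 2
      + (caa * cbb - cab * cab) * d 1 ^ 2 := by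
    rw [costForm_apply]; ring
  have hcaaQ : caa * costForm caa cab cbb d ≤ 0 := mul_nonpos_of_nonneg_of_nonpos ha.le h
  have h1 : d 1 = 0 := by
    have : d 1 ^ 2 ≤ 0 := by nlinarith [sq_nonneg (caa * d 0 + cab * d 1)]
    exact (sq_nonpos_iff _).mp this
  have h0 : d 0 = 0 := by
    have : (caa * d 0) ^ 2 ≤ 0 := by rw [hcompl, h1] at hcaaQ; simpa using hcaaQ
    exact (mul_eq_zero.mp ((sq_nonpos_iff _).mp this)).resolve_left ha.ne'
  ext i; fin_cases i <;> simp [h0, h1]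

end PositiveDefinite

lemma det_pos_of_bddAbove {caa cab cbb sα sβ M : ℝ} (p : Fin 2 → ℝ) (hb : 0 < cbb)
    (hc : cab < √(caa * cbb)) (hsα : 0 < sα) (hsβ : 0 < sβ)
    (hbdd : ∀ x ∈ Ici p, sα * x 0 + sβ * x 1 - costForm caa cab cbb x ≤ M) :
    0 < caa * cbb - cab * cab := by
  by_contra! hdet
  have hcab : cab < 0 := by
    by_contra! hcab
    have : √(caa * cbb) ≤ cab := by
      simpa [Real.sqrt_mul_self hcab] using Real.sqrt_le_sqrt (by linarith : caa * cbb ≤ cab * cab)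
    linarith
  -- `costForm (t • ![cbb, -cab]) = t² cbb det ≤ 0`, while the revenue grows linearly in `t`
  have hslope : 0 < sα * cbb - sβ * cab := by nlinarith
  set t := max (max (p 0 / cbb) (p 1 / -cab)) ((M + 1) / (sα * cbb - sβ * cab))
  have hpt : p ≤ t • ![cbb, -cab] := by
    intro i
    fin_cases i
    · simpa using (div_le_iff₀ hb).mp ((le_max_left _ (p 1 / -cab)).trans (le_max_left _ _))
    · simpa using (div_le_iff₀ (neg_pos.mpr hcab)).mp
        ((le_max_right (p 0 / cbb) _).trans (le_max_left _ _))
  have hM : M + 1 ≤ t * (sα * cbb - sβ * cab) := (div_le_iff₀ hslope).mp (le_max_right _ _)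
  have hval := hbdd _ hpt
  simp only [costForm_apply, Pi.smul_apply, cons_val_zero, cons_val_one, smul_eq_mul] at hval
  nlinarith [mul_nonneg hb.le (sq_nonneg t)]

lemma mulVec_smul_nonsing_inv_mulVec {n K : Type*} [Fintype n] [DecidableEq n] [Field K]
    (A : Matrix n n K) (hA : IsUnit A.det) (k : K) (r : n → K) :
    A *ᵥ (k • A⁻¹ *ᵥ r) = k • r := by
  rw [mulVec_smul, mulVec_mulVec, mul_nonsing_inv _ hA, one_mulVec]

lemma mulVec_fin_two_eq_smul_iff {caa cab cbb k : ℝ} {v r : Fin 2 → ℝ} :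
    (!![caa, cab; cab, cbb] : Matrix (Fin 2) (Fin 2) ℝ) *ᵥ v = k • r ↔
      caa * v 0 + cab * v 1 = k * r 0 ∧ cab * v 0 + cbb * v 1 = k * r 1 := by
  simp [funext_iff, Fin.forall_fin_two, dotProduct, Fin.sum_univ_two]

lemma InvCond.lt_sqrt {caa cab cbb rα rβ : ℝ} (h : InvCond caa cab cbb rα rβ) :
    cab < √(caa * cbb) :=
  h.trans_le (min_le_left _ _)

lemma InvCond.nonneg_of_mulVec_eq_smul {caa cab cbb rα rβ k : ℝ} {v : Fin 2 → ℝ}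
    (h : InvCond caa cab cbb rα rβ) (hrα : 0 < rα) (hrβ : 0 < rβ)
    (hdet : 0 < caa * cbb - cab * cab) (hk : 0 ≤ k)
    (hv : (!![caa, cab; cab, cbb] : Matrix (Fin 2) (Fin 2) ℝ) *ᵥ v = k • ![rα, rβ]) : 0 ≤ v := by
  have hα : cab * rβ < cbb * rα :=
    (lt_div_iff₀ hrβ).mp (h.trans_le ((min_le_right _ _).trans (min_le_right _ _)))
  have hβ : cab * rα < caa * rβ :=
    (lt_div_iff₀ hrα).mp (h.trans_le ((min_le_right _ _).trans (min_le_left _ _)))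
  obtain ⟨h0, h1⟩ := mulVec_fin_two_eq_smul_iff.mp hv
  simp only [cons_val_zero, cons_val_one] at h0 h1
  -- Cramer's rule
  have hv0 : (caa * cbb - cab * cab) * v 0 = k * (cbb * rα - cab * rβ) := by
    linear_combination cbb * h0 - cab * h1
  have hv1 : (caa * cbb - cab * cab) * v 1 = k * (caa * rβ - cab * rα) := by
    linear_combination caa * h1 - cab * h0
  intro i
  fin_cases i
  · exact nonneg_of_mul_nonneg_right (hv0 ▸ mul_nonneg hk (by linarith)) hdet
  · exact nonneg_of_mul_nonneg_right (hv1 ▸ mul_nonneg hk (by linarith)) hdet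

/-- `F(γ0, θD) = Ici (complianceFloor θD γ0)`. -/
def complianceFloor (θD : ℝ) (γ0 : Fin 2 → ℝ) : Fin 2 → ℝ := ![γ0 0, max (γ0 1) θD]

lemma mem_Ici_complianceFloor {θD : ℝ} {γ0 γ : Fin 2 → ℝ} :
    γ ∈ Ici (complianceFloor θD γ0) ↔ γ0 0 ≤ γ 0 ∧ max (γ0 1) θD ≤ γ 1 := by
  simp [complianceFloor, Pi.le_def, Fin.forall_fin_two]

section Specialist

variable {c1aa c1ab c1bb rα rβ δ θD : ℝ}

def IsBestResponse (c1aa c1ab c1bb rα rβ δ θD : ℝ) (γ0 γ1 : Fin 2 → ℝ) : Prop :=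
  γ1 ∈ Ici (complianceFloor θD γ0) ∧
    IsMaxOn (UD c1aa c1ab c1bb rα rβ δ γ0) (Ici (complianceFloor θD γ0)) γ1

lemma isBestResponse_iff {γ0 γ1 : Fin 2 → ℝ} :
    IsBestResponse c1aa c1ab c1bb rα rβ δ θD γ0 γ1 ↔
      (γ0 0 ≤ γ1 0 ∧ max (γ0 1) θD ≤ γ1 1) ∧
        ∀ γ : Fin 2 → ℝ, γ0 0 ≤ γ 0 → max (γ0 1) θD ≤ γ 1 →
          UD c1aa c1ab c1bb rα rβ δ γ0 γ ≤ UD c1aa c1ab c1bb rα rβ δ γ0 γ1 := by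
  simp only [IsBestResponse, isMaxOn_iff, mem_Ici_complianceFloor, and_imp]

lemma UD_eq (γ0 γ1 : Fin 2 → ℝ) :
    UD c1aa c1ab c1bb rα rβ δ γ0 γ1 =
      (1 - δ) * (rα * γ1 0 + rβ * γ1 1) - costForm c1aa c1ab c1bb (γ1 - γ0) :=
  rfl

lemma UD_add_smul_sub (γ0 x y : Fin 2 → ℝ) (t : ℝ) :
    UD c1aa c1ab c1bb rα rβ δ γ0 (x + t • (y - x)) =
      (1 - t) * UD c1aa c1ab c1bb rα rβ δ γ0 x + t * UD c1aa c1ab c1bb rα rβ δ γ0 y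
        + t * (1 - t) * costForm c1aa c1ab c1bb (y - x) := by
  simp only [UD_eq, costForm_apply, Pi.add_apply, Pi.sub_apply, Pi.smul_apply, smul_eq_mul]
  ring

lemma UD_eq_sub_costForm {v : Fin 2 → ℝ}
    (hv : (!![c1aa, c1ab; c1ab, c1bb] : Matrix (Fin 2) (Fin 2) ℝ) *ᵥ v =
      ((1 - δ) / 2) • ![rα, rβ]) (γ0 γ : Fin 2 → ℝ) :
    UD c1aa c1ab c1bb rα rβ δ γ0 γ =
      UD c1aa c1ab c1bb rα rβ δ γ0 (γ0 + v) - costForm c1aa c1ab c1bb (γ0 + v - γ) := by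
  obtain ⟨h0, h1⟩ := mulVec_fin_two_eq_smul_iff.mp hv
  simp only [cons_val_zero, cons_val_one] at h0 h1
  simp only [UD_eq, costForm_apply, Pi.add_apply, Pi.sub_apply]
  linear_combination (2 * (γ0 0 + v 0 - γ 0)) * h0 + (2 * (γ0 1 + v 1 - γ 1)) * h1

lemma IsBestResponse.det_pos {γ0 γ1 : Fin 2 → ℝ}
    (h : IsBestResponse c1aa c1ab c1bb rα rβ δ θD γ0 γ1) (hbb : 0 < c1bb)
    (hc : c1ab < √(c1aa * c1bb)) (hrα : 0 < rα) (hrβ : 0 < rβ) (hδ : δ < 1) :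
    0 < c1aa * c1bb - c1ab * c1ab := by
  refine det_pos_of_bddAbove (complianceFloor θD γ0 - γ0) hbb hc
    (mul_pos (sub_pos.mpr hδ) hrα) (mul_pos (sub_pos.mpr hδ) hrβ)
    (M := UD c1aa c1ab c1bb rα rβ δ γ0 γ1 - (1 - δ) * (rα * γ0 0 + rβ * γ0 1)) fun x hx => ?_
  have hle : UD c1aa c1ab c1bb rα rβ δ γ0 (γ0 + x) ≤ UD c1aa c1ab c1bb rα rβ δ γ0 γ1 :=
    h.2 (mem_Ici.mpr (sub_le_iff_le_add'.mp hx))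
  rw [UD_eq γ0 (γ0 + x), add_sub_cancel_left] at hle
  simp only [Pi.add_apply] at hle
  linarith

lemma IsBestResponse.unique (ha : 0 < c1aa) (hdet : 0 < c1aa * c1bb - c1ab * c1ab)
    {γ0 γ1 γ2 : Fin 2 → ℝ} (h1 : IsBestResponse c1aa c1ab c1bb rα rβ δ θD γ0 γ1)
    (h2 : IsBestResponse c1aa c1ab c1bb rα rβ δ θD γ0 γ2) : γ1 = γ2 := by
  have hmid_le : UD c1aa c1ab c1bb rα rβ δ γ0 (γ1 + (1 / 2 : ℝ) • (γ2 - γ1)) ≤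
      UD c1aa c1ab c1bb rα rβ δ γ0 γ1 :=
    h1.2 ((convex_Ici _).add_smul_sub_mem h1.1 h2.1 ⟨by norm_num, by norm_num⟩)
  have h21 : UD c1aa c1ab c1bb rα rβ δ γ0 γ2 ≤ UD c1aa c1ab c1bb rα rβ δ γ0 γ1 := h1.2 h2.1
  have h12 : UD c1aa c1ab c1bb rα rβ δ γ0 γ1 ≤ UD c1aa c1ab c1bb rα rβ δ γ0 γ2 := h2.2 h1.1
  rw [UD_add_smul_sub] at hmid_le
  have hQ : costForm c1aa c1ab c1bb (γ2 - γ1) ≤ 0 := by linarith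
  exact (sub_eq_zero.mp (eq_zero_of_costForm_nonpos ha hdet hQ)).symm

lemma IsBestResponse.eq_of_add_smul_sub_mem {v : Fin 2 → ℝ}
    (hv : (!![c1aa, c1ab; c1ab, c1bb] : Matrix (Fin 2) (Fin 2) ℝ) *ᵥ v =
      ((1 - δ) / 2) • ![rα, rβ])
    (ha : 0 < c1aa) (hdet : 0 < c1aa * c1bb - c1ab * c1ab) {γ0 γ1 : Fin 2 → ℝ}
    (h : IsBestResponse c1aa c1ab c1bb rα rβ δ θD γ0 γ1) {t : ℝ} (ht0 : 0 < t) (ht1 : t ≤ 1)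
    (hmem : γ1 + t • (γ0 + v - γ1) ∈ Ici (complianceFloor θD γ0)) : γ1 = γ0 + v := by
  have hle : UD c1aa c1ab c1bb rα rβ δ γ0 (γ1 + t • (γ0 + v - γ1)) ≤
      UD c1aa c1ab c1bb rα rβ δ γ0 γ1 := h.2 hmem
  rw [UD_add_smul_sub, UD_eq_sub_costForm hv γ0 γ1] at hle
  have hQ : t * (2 - t) * costForm c1aa c1ab c1bb (γ0 + v - γ1) ≤ 0 := by linarith
  have hQ' : costForm c1aa c1ab c1bb (γ0 + v - γ1) ≤ 0 :=
    nonpos_of_mul_nonpos_right hQ (mul_pos ht0 (by linarith))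
  exact (sub_eq_zero.mp (eq_zero_of_costForm_nonpos ha hdet hQ')).symm

lemma IsBestResponse.eq_add_of_lt {v : Fin 2 → ℝ}
    (hv : (!![c1aa, c1ab; c1ab, c1bb] : Matrix (Fin 2) (Fin 2) ℝ) *ᵥ v =
      ((1 - δ) / 2) • ![rα, rβ]) (hv0 : 0 ≤ v)
    (ha : 0 < c1aa) (hdet : 0 < c1aa * c1bb - c1ab * c1ab) {γ0 γ1 : Fin 2 → ℝ}
    (h : IsBestResponse c1aa c1ab c1bb rα rβ δ θD γ0 γ1) (hlt : θD < γ1 1) : γ1 = γ0 + v := by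
  have hv0' := hv0 0
  have hv1' := hv0 1
  simp only [Pi.zero_apply] at hv0' hv1'
  obtain ⟨hγ1α, hγ1β⟩ := mem_Ici_complianceFloor.mp h.1
  rcases le_or_gt θD (γ0 1 + v 1) with hw | hw
  · refine h.eq_of_add_smul_sub_mem hv ha hdet one_pos le_rfl ?_
    rw [one_smul, add_sub_cancel, mem_Ici_complianceFloor]
    exact ⟨by simp [hv0'], max_le (by simp [hv1']) (by simpa using hw)⟩
  -- otherwise move from `γ1` towards `γ0 + v` until the floor `θD` is reached
  · have hden : 0 < γ1 1 - (γ0 1 + v 1) := by linarith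
    set t := (γ1 1 - θD) / (γ1 1 - (γ0 1 + v 1)) with ht
    have ht0 : 0 < t := div_pos (by linarith) hden
    have ht1 : t ≤ 1 := (div_le_one hden).mpr (by linarith)
    have hβ : γ1 1 + t * (γ0 1 + v 1 - γ1 1) = θD := by
      rw [ht]; field_simp; ring
    refine h.eq_of_add_smul_sub_mem hv ha hdet ht0 ht1 (mem_Ici_complianceFloor.mpr ⟨?_, ?_⟩)
    · simp only [Pi.add_apply, Pi.smul_apply, Pi.sub_apply, smul_eq_mul]
      nlinarith [le_of_max_le_left hγ1β]
    · simp only [Pi.add_apply, Pi.smul_apply, Pi.sub_apply, smul_eq_mul, hβ]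
      exact max_le (by linarith) le_rfl

end Specialist

section Equilibrium

variable {c0aa c0ab c0bb c1aa c1ab c1bb rα rβ δ θG θD : ℝ}
  {b : (Fin 2 → ℝ) → (Fin 2 → ℝ)} {γ0s : Fin 2 → ℝ}

lemma UG_eq (γ0 γ1 : Fin 2 → ℝ) :
    UG c0aa c0ab c0bb rα rβ δ γ0 γ1 =
      δ * (rα * γ1 0 + rβ * γ1 1) - costForm c0aa c0ab c0bb γ0 :=
  rfl

lemma UG_add_le {a : Fin 2 → ℝ}
    (ha : (!![c0aa, c0ab; c0ab, c0bb] : Matrix (Fin 2) (Fin 2) ℝ) *ᵥ a = (δ / 2) • ![rα, rβ])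
    (hc : 0 < c0aa) (hdet : 0 < c0aa * c0bb - c0ab * c0ab) (γ0 v : Fin 2 → ℝ) :
    UG c0aa c0ab c0bb rα rβ δ γ0 (γ0 + v) ≤ UG c0aa c0ab c0bb rα rβ δ a (a + v) := by
  obtain ⟨h0, h1⟩ := mulVec_fin_two_eq_smul_iff.mp ha
  simp only [cons_val_zero, cons_val_one] at h0 h1
  have hgap : UG c0aa c0ab c0bb rα rβ δ a (a + v) - UG c0aa c0ab c0bb rα rβ δ γ0 (γ0 + v) =
      costForm c0aa c0ab c0bb (γ0 - a) := by
    simp only [UG_eq, costForm_apply, Pi.add_apply, Pi.sub_apply]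
    linear_combination (2 * (γ0 0 - a 0)) * h0 + (2 * (γ0 1 - a 1)) * h1
  linarith [costForm_nonneg hc hdet (γ0 - a)]

lemma IsSPE.isBestResponse (h : IsSPE c0aa c0ab c0bb c1aa c1ab c1bb rα rβ δ θG θD b γ0s)
    (γ0 : Fin 2 → ℝ) : IsBestResponse c1aa c1ab c1bb rα rβ δ θD γ0 (b γ0) :=
  isBestResponse_iff.mpr (h.1 γ0)

lemma IsSPE.det_pos (h : IsSPE c0aa c0ab c0bb c1aa c1ab c1bb rα rβ δ θG θD b γ0s)
    (hbb : 0 < c0bb) (hc : c0ab < √(c0aa * c0bb)) (hrα : 0 < rα) (hrβ : 0 < rβ) (hδ : 0 < δ) :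
    0 < c0aa * c0bb - c0ab * c0ab := by
  refine det_pos_of_bddAbove ![0, θG] hbb hc (mul_pos hδ hrα) (mul_pos hδ hrβ)
    (M := UG c0aa c0ab c0bb rα rβ δ γ0s (b γ0s)) fun x hx => ?_
  have hx0 : 0 ≤ x 0 := by simpa using hx 0
  have hx1 : θG ≤ x 1 := by simpa using hx 1
  obtain ⟨hb0, hb1⟩ := mem_Ici_complianceFloor.mp (h.isBestResponse x).1
  have hle := h.2.2.2 x hx0 hx1
  rw [UG_eq] at hle
  nlinarith [mul_le_mul_of_nonneg_left hb0 (mul_pos hδ hrα).le,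
    mul_le_mul_of_nonneg_left (le_of_max_le_left hb1) (mul_pos hδ hrβ).le]

lemma IsSPE.UG_le_of_isBestResponse
    (h : IsSPE c0aa c0ab c0bb c1aa c1ab c1bb rα rβ δ θG θD b γ0s)
    (ha : 0 < c1aa) (hdet : 0 < c1aa * c1bb - c1ab * c1ab) {γ0 γ1 : Fin 2 → ℝ}
    (hα : 0 ≤ γ0 0) (hβ : θG ≤ γ0 1) (hγ1 : IsBestResponse c1aa c1ab c1bb rα rβ δ θD γ0 γ1) :
    UG c0aa c0ab c0bb rα rβ δ γ0 γ1 ≤ UG c0aa c0ab c0bb rα rβ δ γ0s (b γ0s) := by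
  rw [← (h.isBestResponse γ0).unique ha hdet hγ1]
  exact h.2.2.2 γ0 hα hβ

lemma IsSPE.UG_le_of_floor_lt (h : IsSPE c0aa c0ab c0bb c1aa c1ab c1bb rα rβ δ θG θD b γ0s)
    (hcond : InvCond c1aa c1ab c1bb rα rβ) (hrα : 0 < rα) (hrβ : 0 < rβ) (hδ : δ < 1)
    (ha0 : 0 < c0aa) (hdet0 : 0 < c0aa * c0bb - c0ab * c0ab)
    (ha1 : 0 < c1aa) (hdet1 : 0 < c1aa * c1bb - c1ab * c1ab) (hlt : θD < b γ0s 1) :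
    UG c0aa c0ab c0bb rα rβ δ γ0s (b γ0s) ≤
      UG c0aa c0ab c0bb rα rβ δ (gamma0A c0aa c0ab c0bb rα rβ δ)
        (gamma1A c0aa c0ab c0bb c1aa c1ab c1bb rα rβ δ) := by
  have hv := mulVec_smul_nonsing_inv_mulVec !![c1aa, c1ab; c1ab, c1bb]
    (by rw [det_fin_two_of]; exact hdet1.ne'.isUnit) ((1 - δ) / 2) ![rα, rβ]
  have ha := mulVec_smul_nonsing_inv_mulVec !![c0aa, c0ab; c0ab, c0bb]
    (by rw [det_fin_two_of]; exact hdet0.ne'.isUnit) (δ / 2) ![rα, rβ]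
  have hv0 := hcond.nonneg_of_mulVec_eq_smul hrα hrβ hdet1 (by linarith) hv
  rw [(h.isBestResponse γ0s).eq_add_of_lt hv hv0 ha1 hdet1 hlt]
  exact UG_add_le ha ha0 hdet0 γ0s _

end Equilibrium

theorem minimal_compliance_implies_backfiring_general
    (c0aa c0bb c0ab c1aa c1bb c1ab rα rβ δ θD : ℝ)
    (hc0aa : 0 < c0aa) (hc0bb : 0 < c0bb) (hc1aa : 0 < c1aa) (hc1bb : 0 < c1bb)
    (hrα : 0 < rα) (hrβ : 0 < rβ) (hδ0 : 0 < δ) (hδ1 : δ < 1)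
    (hcond0 : InvCond c0aa c0ab c0bb rα rβ)
    (hcond1 : InvCond c1aa c1ab c1bb rα rβ)
    (hθD1 : θD < gamma1A c0aa c0ab c0bb c1aa c1ab c1bb rα rβ δ 1)
    (γ0' γ1' : Fin 2 → ℝ) (hα0' : 0 ≤ γ0' 0) (hβ0' : 0 ≤ γ0' 1)
    (hfeas' : γ0' 0 ≤ γ1' 0 ∧ max (γ0' 1) θD ≤ γ1' 1)
    (hmax' : ∀ γ : Fin 2 → ℝ, γ0' 0 ≤ γ 0 → max (γ0' 1) θD ≤ γ 1 →
      UD c1aa c1ab c1bb rα rβ δ γ0' γ ≤ UD c1aa c1ab c1bb rα rβ δ γ0' γ1')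
    (hbetter : UG c0aa c0ab c0bb rα rβ δ (gamma0A c0aa c0ab c0bb rα rβ δ)
        (gamma1A c0aa c0ab c0bb c1aa c1ab c1bb rα rβ δ) <
      UG c0aa c0ab c0bb rα rβ δ γ0' γ1') :
    ∀ (b : (Fin 2 → ℝ) → (Fin 2 → ℝ)) (γ0s : Fin 2 → ℝ),
      IsSPE c0aa c0ab c0bb c1aa c1ab c1bb rα rβ δ 0 θD b γ0s →
      (b γ0s) 1 = θD ∧
      (b γ0s) 1 < gamma1A c0aa c0ab c0bb c1aa c1ab c1bb rα rβ δ 1 := by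
  intro b γ0s hSPE
  have hdet1 := (hSPE.isBestResponse 0).det_pos hc1bb hcond1.lt_sqrt hrα hrβ hδ1
  have hdet0 := hSPE.det_pos hc0bb hcond0.lt_sqrt hrα hrβ hδ0
  have hγ1' : IsBestResponse c1aa c1ab c1bb rα rβ δ θD γ0' γ1' :=
    isBestResponse_iff.mpr ⟨hfeas', hmax'⟩
  have hsafety : b γ0s 1 = θD := by
    refine le_antisymm (not_lt.mp fun hlt => ?_)
      (le_of_max_le_right (mem_Ici_complianceFloor.mp (hSPE.isBestResponse γ0s).1).2)
    have hUGs := hSPE.UG_le_of_floor_lt hcond1 hrα hrβ hδ1 hc0aa hdet0 hc1aa hdet1 hlt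
    have hUG' := hSPE.UG_le_of_isBestResponse hc1aa hdet1 hα0' hβ0' hγ1'
    linarith
  exact ⟨hsafety, hsafety ▸ hθD1⟩

/-- If some minimally compliant pair `(γ0', γ1')` gives the generalist strictly more
utility than the no-regulation equilibrium `(γ0^A, γ1^A)`, then under regulation
`(0, θD)` with `0 ≤ θD < β1^A` every subgame perfect equilibrium outcome has safety
exactly `θD`; in particular the regulation backfires. -/
theorem minimal_compliance_implies_backfiring
    (c0aa c0bb c0ab c1aa c1bb c1ab rα rβ δ θD : ℝ)
    (hc0aa : 0 < c0aa) (hc0bb : 0 < c0bb) (hc1aa : 0 < c1aa) (hc1bb : 0 < c1bb)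
    (hrα : 0 < rα) (hrβ : 0 < rβ) (hδ0 : 0 < δ) (hδ1 : δ < 1)
    (hcond0 : InvCond c0aa c0ab c0bb rα rβ)
    (hcond1 : InvCond c1aa c1ab c1bb rα rβ)
    (hθD0 : 0 ≤ θD)
    (hθD1 : θD < gamma1A c0aa c0ab c0bb c1aa c1ab c1bb rα rβ δ 1)
    (γ0' γ1' : Fin 2 → ℝ) (hα0' : 0 ≤ γ0' 0) (hβ0' : 0 ≤ γ0' 1)
    (hfeas' : γ0' 0 ≤ γ1' 0 ∧ max (γ0' 1) θD ≤ γ1' 1)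
    (hmax' : ∀ γ : Fin 2 → ℝ, γ0' 0 ≤ γ 0 → max (γ0' 1) θD ≤ γ 1 →
      UD c1aa c1ab c1bb rα rβ δ γ0' γ ≤ UD c1aa c1ab c1bb rα rβ δ γ0' γ1')
    (hmincomp : γ1' 1 = θD)
    (hbetter : UG c0aa c0ab c0bb rα rβ δ (gamma0A c0aa c0ab c0bb rα rβ δ)
        (gamma1A c0aa c0ab c0bb c1aa c1ab c1bb rα rβ δ) <
      UG c0aa c0ab c0bb rα rβ δ γ0' γ1') :
    ∀ (b : (Fin 2 → ℝ) → (Fin 2 → ℝ)) (γ0s : Fin 2 → ℝ),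
      IsSPE c0aa c0ab c0bb c1aa c1ab c1bb rα rβ δ 0 θD b γ0s →
      (b γ0s) 1 = θD ∧
      (b γ0s) 1 < gamma1A c0aa c0ab c0bb c1aa c1ab c1bb rα rβ δ 1 :=
  minimal_compliance_implies_backfiring_general c0aa c0bb c0ab c1aa c1bb c1ab rα rβ δ θD hc0aa hc0bb
    hc1aa hc1bb hrα hrβ hδ0 hδ1 hcond0 hcond1 hθD1 γ0' γ1' hα0' hβ0' hfeas' hmax' hbetter
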